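/- Let k ∈ {2, 3}, a > 0, c ≠ 0, σ ≤ μ, σ < −μ, δ ∈ (0, |a/c|), and fix û ∈ [−δ, −μδ/σ]. Define I(ρ) = û e^{μρ} + σ ∫_{−ρ}^{0} e^{−μθ} η_{(k)}(θ) dθ for ρ > 0, so that I'(ρ) = e^{μρ}[μ û + σ η_{(k)}(−ρ)]. Then: (A) if μ ≤ 0, I'(ρ) > 0; (B) if μ > 0 and η_{(k)}(−ρ) ≤ 0, I'(ρ) > 0; (C) if I'(ρ) ≤ 0, then μ > 0, η_{(k)}(−ρ) > 0, and I(ρ) < δ. -/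

import Mathlib

/-- The constant `D₁ = (|μ|+|σ|)(1 + (|μ|+|σ|)|c|δ)`. -/
noncomputable def D1 (μ σ c δ : ℝ) : ℝ := (|μ| + |σ|) * (1 + (|μ| + |σ|) * |c| * δ)

/-- The constant `D₂ = (D₁² + (|μ|+|σ|)³|c|δ)(1 + |σc|δ)`. -/
noncomputable def D2 (μ σ c δ : ℝ) : ℝ :=
  ((D1 μ σ c δ) ^ 2 + (|μ| + |σ|) ^ 3 * |c| * δ) * (1 + |σ * c| * δ)

/-- The profile `η̄` used to define `η_{(3)}`. -/
noncomputable def etabar (δ d1 d2 s : ℝ) : ℝ :=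
  if s ≤ 0 then -δ
  else if s < d1 / d2 then -δ + δ * d2 / 2 * s ^ 2
  else -δ - δ * d1 ^ 2 / (2 * d2) + δ * d1 * s

/-- The shift `θ_shift` used to define `η_{(3)}`. -/
noncomputable def thetaShift (δ d1 d2 uh : ℝ) : ℝ :=
  if uh ≤ -δ + δ * d1 ^ 2 / (2 * d2) then Real.sqrt (2 * (uh + δ) / (d2 * δ))
  else (uh + δ + δ * d1 ^ 2 / (2 * d2)) / (d1 * δ)

/-- The extremal forcing functions `η_{(k)}` for `k = 1, 2, 3`. -/
noncomputable def etaK (μ σ c δ uh : ℝ) : ℕ → ℝ → ℝ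
  | 1, θ => if θ < 0 then -δ else uh
  | 2, θ => max (uh + D1 μ σ c δ * δ * θ) (-δ)
  | 3, θ => etabar δ (D1 μ σ c δ) (D2 μ σ c δ)
      (θ + thetaShift δ (D1 μ σ c δ) (D2 μ σ c δ) uh)
  | _, _ => 0

/-- `I(û, δ, ĉ, k) = û e^{μ(a+ĉδ)} + σ ∫_{-(a+ĉδ)}^{0} e^{-μθ} η_{(k)}(θ) dθ`
(the constants `D₁, D₂` in `η_{(k)}` are computed from `|c|`, while `ĉ` only enters
the integration limits). -/
noncomputable def Ifun (μ σ c a δ chat uh : ℝ) (k : ℕ) : ℝ :=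
  uh * Real.exp (μ * (a + chat * δ)) +
    σ * ∫ θ in (-(a + chat * δ))..(0 : ℝ), Real.exp (-μ * θ) * etaK μ σ c δ uh k θ

/-- `P(δ, c, k) = sup_{û ∈ [-δ, -μδ/σ]} I(û, δ, |c|, k)`. -/
noncomputable def Pfun (μ σ c a δ : ℝ) (k : ℕ) : ℝ :=
  sSup ((fun uh => Ifun μ σ c a δ |c| uh k) '' Set.Icc (-δ) (-μ * δ / σ))

/-- `r = a + |c|δ`. -/
noncomputable def rr (a c δ : ℝ) : ℝ := a + |c| * δ

/-- The explicit one-piece integral `I₁(û, δ)` (for `μ ≠ 0`). -/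
noncomputable def I1fun (μ σ c a δ uh : ℝ) : ℝ :=
  uh * (Real.exp (μ * rr a c δ) + σ / μ * (Real.exp (μ * rr a c δ) - 1)) +
    σ / μ * D1 μ σ c δ * δ *
      (1 / μ * (Real.exp (μ * rr a c δ) - 1) - rr a c δ * Real.exp (μ * rr a c δ))

/-- The explicit two-piece integral `I₂(û, δ)` (for `μ ≠ 0`). -/
noncomputable def I2fun (μ σ c a δ uh : ℝ) : ℝ :=
  uh * (Real.exp (μ * rr a c δ) - σ / μ) +
    σ / μ * δ * (D1 μ σ c δ / μ *
      (Real.exp (μ * (δ + uh) / (D1 μ σ c δ * δ)) - 1) - Real.exp (μ * rr a c δ))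

/-!
Each `η_{(k)}` is continuous and nondecreasing, and for `θ < 0` it lies strictly below `û` unless
it sits at its floor `-δ`; the derivative formula is the fundamental theorem of calculus. Since
`σ < 0` and `μ + σ < 0`, this makes `μû + ση_{(k)}(-ρ)` positive whenever `û ≤ 0` (which holds
for `μ ≤ 0`) or `η_{(k)}(-ρ) ≤ 0`. If instead `μû + ση_{(k)}(-ρ) ≤ 0`, monotonicity spreads this
bound to `σ e^{-μθ} η_{(k)}(θ) ≤ -μû e^{-μθ}` on `[-ρ, 0]`, and integrating gives `I(ρ) ≤ û < δ`.
-/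

noncomputable def forcingIntegral (μ σ u : ℝ) (η : ℝ → ℝ) (ρ : ℝ) : ℝ :=
  u * Real.exp (μ * ρ) + σ * ∫ θ in (-ρ)..0, Real.exp (-μ * θ) * η θ

theorem hasDerivAt_const_mul_exp_mul (u μ x : ℝ) :
    HasDerivAt (fun t => u * Real.exp (μ * t)) (μ * u * Real.exp (μ * x)) x := by
  refine (((hasDerivAt_id x).const_mul μ).exp.const_mul u).congr_deriv ?_
  simp only [id, mul_one]
  ring

section ForcingIntegral

variable {μ σ u : ℝ} {η : ℝ → ℝ}

theorem hasDerivAt_forcingIntegral (hη : Continuous η) (ρ : ℝ) :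
    HasDerivAt (forcingIntegral μ σ u η) (Real.exp (μ * ρ) * (μ * u + σ * η (-ρ))) ρ := by
  have hg : Continuous fun θ => Real.exp (-μ * θ) * η θ := by fun_prop
  have hint : HasDerivAt (fun ρ => ∫ θ in (-ρ)..0, Real.exp (-μ * θ) * η θ)
      (Real.exp (μ * ρ) * η (-ρ)) ρ := by
    refine ((intervalIntegral.integral_hasDerivAt_left (hg.intervalIntegrable (-ρ) 0)
      (hg.stronglyMeasurableAtFilter _ _) hg.continuousAt).comp ρ (hasDerivAt_neg ρ)).congr_deriv ?_
    simp only [mul_neg, mul_one, neg_neg, neg_mul]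
  refine ((hasDerivAt_const_mul_exp_mul u μ ρ).add (hint.const_mul σ)).congr_deriv ?_
  ring

theorem forcingIntegral_le (hη : Monotone η) (hσ : σ ≤ 0) {ρ : ℝ} (hρ : 0 ≤ ρ)
    (hrate : μ * u + σ * η (-ρ) ≤ 0) : forcingIntegral μ σ u η ρ ≤ u := by
  have hpt : ∀ θ ∈ Set.Icc (-ρ) 0,
      σ * (Real.exp (-μ * θ) * η θ) ≤ -μ * u * Real.exp (-μ * θ) := by
    intro θ hθ
    have : σ * η θ ≤ -μ * u := by nlinarith [hη hθ.1]
    nlinarith [Real.exp_pos (-μ * θ)]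
  have hbound : ∫ θ in (-ρ)..0, σ * (Real.exp (-μ * θ) * η θ) ≤ u - u * Real.exp (μ * ρ) := by
    calc _ ≤ ∫ θ in (-ρ)..0, -μ * u * Real.exp (-μ * θ) :=
          intervalIntegral.integral_mono_on (by linarith)
            ((hη.intervalIntegrable.continuousOn_mul (by fun_prop)).const_mul σ)
            ((by fun_prop : Continuous fun θ => -μ * u * Real.exp (-μ * θ)).intervalIntegrable _ _)
            hpt
      _ = u - u * Real.exp (μ * ρ) := by
          rw [intervalIntegral.integral_eq_sub_of_hasDerivAt
            (fun θ _ => hasDerivAt_const_mul_exp_mul u (-μ) θ)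
            ((by fun_prop : Continuous fun θ => -μ * u * Real.exp (-μ * θ)).intervalIntegrable _ _)]
          simp
  rw [intervalIntegral.integral_const_mul] at hbound
  unfold forcingIntegral
  linarith

end ForcingIntegral

structure IsForcingProfile (δ u : ℝ) (η : ℝ → ℝ) : Prop where
  continuous : Continuous η
  monotone : Monotone η
  lt_or_eq_of_neg : ∀ θ < 0, η θ < u ∨ η θ = -δ

namespace IsForcingProfile

variable {δ u μ σ θ : ℝ} {η : ℝ → ℝ}

theorem le_of_neg (h : IsForcingProfile δ u η) (hu : -δ ≤ u) (hθ : θ < 0) : η θ ≤ u := by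
  rcases h.lt_or_eq_of_neg θ hθ with hlt | heq
  · exact hlt.le
  · exact heq ▸ hu

theorem lt_zero_of_nonpos (h : IsForcingProfile δ u η) (hδ : 0 < δ) (hu : u ≤ 0) (hθ : θ < 0) :
    η θ < 0 := by
  rcases h.lt_or_eq_of_neg θ hθ with hlt | heq
  · exact hlt.trans_le hu
  · linarith

theorem mul_add_mul_pos (h : IsForcingProfile δ u η) (hσ : σ < 0) (hμσ : μ + σ < 0) (hδ : 0 < δ)
    (hu : u ∈ Set.Icc (-δ) (-μ * δ / σ)) (hθ : θ < 0) (hμη : μ ≤ 0 ∨ η θ ≤ 0) :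
    0 < μ * u + σ * η θ := by
  by_cases hu₀ : u ≤ 0
  · have hηu := h.le_of_neg hu.1 hθ
    rcases hu₀.lt_or_eq with hu₀ | rfl
    · nlinarith
    · nlinarith [h.lt_zero_of_nonpos hδ le_rfl hθ]
  · have hμ : 0 < μ := by
      by_contra! hμ
      have : -μ * δ / σ ≤ 0 := div_nonpos_of_nonneg_of_nonpos (by nlinarith) hσ.le
      linarith [hu.2]
    have hη : η θ ≤ 0 := hμη.resolve_left hμ.not_ge
    nlinarith

end IsForcingProfile

theorem isForcingProfile_max_affine {δ u D : ℝ} (hD : 0 < D) :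
    IsForcingProfile δ u (fun θ => max (u + D * θ) (-δ)) where
  continuous := by fun_prop
  monotone _ _ hst := max_le_max (by nlinarith) le_rfl
  lt_or_eq_of_neg θ hθ := by
    rcases max_choice (u + D * θ) (-δ) with h | h
    · exact .inl (by rw [h]; nlinarith)
    · exact .inr h

section Etabar

variable {δ d1 d2 : ℝ}

theorem etabar_eq (hd1 : 0 < d1) (hd2 : 0 < d2) (s : ℝ) :
    etabar δ d1 d2 s =
      -δ + δ * d2 / 2 * min (max s 0) (d1 / d2) ^ 2 + δ * d1 * max (s - d1 / d2) 0 := by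
  have hq : 0 < d1 / d2 := div_pos hd1 hd2
  unfold etabar
  split_ifs with hs hs'
  · rw [max_eq_right hs, min_eq_left hq.le, max_eq_right (by linarith)]
    ring
  · rw [max_eq_left (not_le.1 hs).le, min_eq_left hs'.le, max_eq_right (by linarith)]
    ring
  · rw [max_eq_left (not_le.1 hs).le, min_eq_right (not_lt.1 hs'), max_eq_left (by linarith)]
    field_simp
    ring

theorem etabar_of_nonpos {s : ℝ} (hs : s ≤ 0) : etabar δ d1 d2 s = -δ := by
  simp [etabar, hs]

theorem etabar_continuous (hd1 : 0 < d1) (hd2 : 0 < d2) : Continuous (etabar δ d1 d2) := by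
  rw [funext (etabar_eq hd1 hd2)]
  fun_prop

theorem etabar_monotone (hδ : 0 ≤ δ) (hd1 : 0 < d1) (hd2 : 0 < d2) :
    Monotone (etabar δ d1 d2) := by
  intro s t hst
  rw [etabar_eq hd1 hd2, etabar_eq hd1 hd2]
  have hm₀ : 0 ≤ min (max s 0) (d1 / d2) := le_min (le_max_right _ _) (div_pos hd1 hd2).le
  gcongr

theorem etabar_strictMonoOn (hδ : 0 < δ) (hd1 : 0 < d1) (hd2 : 0 < d2) :
    StrictMonoOn (etabar δ d1 d2) (Set.Ici 0) := by
  intro s (hs : 0 ≤ s) t (ht : 0 ≤ t) hst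
  rw [etabar_eq hd1 hd2, etabar_eq hd1 hd2, max_eq_left hs, max_eq_left ht]
  rcases lt_or_ge s (d1 / d2) with hsq | hsq
  · have hquad : min s (d1 / d2) ^ 2 < min t (d1 / d2) ^ 2 := by
      rw [min_eq_left hsq.le]
      exact pow_lt_pow_left₀ (lt_min hst hsq) hs two_ne_zero
    have hlin : max (s - d1 / d2) 0 ≤ max (t - d1 / d2) 0 := by gcongr
    have := mul_lt_mul_of_pos_left hquad (by positivity : 0 < δ * d2 / 2)
    have := mul_le_mul_of_nonneg_left hlin (by positivity : 0 ≤ δ * d1)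
    linarith
  · rw [min_eq_right hsq, min_eq_right (by linarith), max_eq_left (by linarith),
      max_eq_left (by linarith)]
    have := mul_lt_mul_of_pos_left (by linarith : s - d1 / d2 < t - d1 / d2)
      (by positivity : 0 < δ * d1)
    linarith

theorem etabar_thetaShift (hδ : 0 < δ) (hd1 : 0 < d1) (hd2 : 0 < d2) {u : ℝ} (hu : -δ ≤ u) :
    etabar δ d1 d2 (thetaShift δ d1 d2 u) = u := by
  have hq : 0 < d1 / d2 := div_pos hd1 hd2
  rw [etabar_eq hd1 hd2]
  unfold thetaShift
  split_ifs with h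
  · set x := 2 * (u + δ) / (d2 * δ) with hx_def
    have hx : 0 ≤ x := div_nonneg (by linarith) (by positivity)
    have hxq : x ≤ (d1 / d2) ^ 2 := by
      rw [div_pow, div_le_div_iff₀ (by positivity) (by positivity)]
      have : (u + δ) * (2 * d2) ≤ δ * d1 ^ 2 := (le_div_iff₀ (by positivity)).1 (by linarith)
      nlinarith
    rw [max_eq_left (Real.sqrt_nonneg x), min_eq_left ((Real.sqrt_le_left hq.le).2 hxq),
      max_eq_right (by linarith [(Real.sqrt_le_left hq.le).2 hxq]), Real.sq_sqrt hx, hx_def]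
    field_simp
    ring
  · have hts : d1 / d2 < (u + δ + δ * d1 ^ 2 / (2 * d2)) / (d1 * δ) := by
      rw [lt_div_iff₀ (by positivity)]
      have : d1 / d2 * (d1 * δ) = 2 * (δ * d1 ^ 2 / (2 * d2)) := by field_simp
      linarith
    rw [max_eq_left (hq.trans hts).le, min_eq_right hts.le, max_eq_left (by linarith)]
    field_simp
    ring

theorem isForcingProfile_etabar_shift (hδ : 0 < δ) (hd1 : 0 < d1) (hd2 : 0 < d2) {u : ℝ}
    (hu : -δ ≤ u) :
    IsForcingProfile δ u (fun θ => etabar δ d1 d2 (θ + thetaShift δ d1 d2 u)) where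
  continuous := (etabar_continuous hd1 hd2).comp (by fun_prop)
  monotone := (etabar_monotone hδ.le hd1 hd2).comp fun _ _ h => by linarith
  lt_or_eq_of_neg θ hθ := by
    set ts := thetaShift δ d1 d2 u
    rcases le_or_gt (θ + ts) 0 with hs | hs
    · exact .inr (etabar_of_nonpos hs)
    · refine .inl ?_
      calc etabar δ d1 d2 (θ + ts) < etabar δ d1 d2 ts :=
            etabar_strictMonoOn hδ hd1 hd2 hs.le (Set.mem_Ici.2 (by linarith)) (by linarith)
        _ = u := etabar_thetaShift hδ hd1 hd2 hu

end Etabar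

theorem D1_pos {μ σ c δ : ℝ} (hσ : σ ≠ 0) (hδ : 0 ≤ δ) : 0 < D1 μ σ c δ := by
  have := abs_pos.2 hσ
  unfold D1
  positivity

theorem D2_pos {μ σ c δ : ℝ} (hσ : σ ≠ 0) (hδ : 0 ≤ δ) : 0 < D2 μ σ c δ := by
  have := pow_pos (D1_pos (μ := μ) (c := c) hσ hδ) 2
  unfold D2
  exact mul_pos (by positivity) (by positivity)

theorem isForcingProfile_etaK {k : ℕ} (hk : k = 2 ∨ k = 3) {μ σ c δ u : ℝ} (hσ : σ ≠ 0)
    (hδ : 0 < δ) (hu : -δ ≤ u) : IsForcingProfile δ u (etaK μ σ c δ u k) := by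
  rcases hk with rfl | rfl
  · exact isForcingProfile_max_affine (mul_pos (D1_pos hσ hδ.le) hδ)
  · exact isForcingProfile_etabar_shift hδ (D1_pos hσ hδ.le) (D2_pos hσ hδ.le) hu

theorem stmt_11_general (k : ℕ) (hk : k = 2 ∨ k = 3)
    (μ σ c δ uh : ℝ)
    (h1 : σ ≤ μ) (h2 : σ < -μ)
    (hδ0 : 0 < δ)
    (huh : uh ∈ Set.Icc (-δ) (-μ * δ / σ)) :
    -- "so that I'(ρ) = e^{μρ}[μ û + σ η_{(k)}(-ρ)]"
    (∀ ρ > (0 : ℝ),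
      HasDerivAt
        (fun ρ => uh * Real.exp (μ * ρ) +
          σ * ∫ θ in (-ρ)..(0 : ℝ), Real.exp (-μ * θ) * etaK μ σ c δ uh k θ)
        (Real.exp (μ * ρ) * (μ * uh + σ * etaK μ σ c δ uh k (-ρ))) ρ) ∧
    -- (A)
    (μ ≤ 0 → ∀ ρ > (0 : ℝ),
      0 < Real.exp (μ * ρ) * (μ * uh + σ * etaK μ σ c δ uh k (-ρ))) ∧
    -- (B)
    (0 < μ → ∀ ρ > (0 : ℝ), etaK μ σ c δ uh k (-ρ) ≤ 0 →
      0 < Real.exp (μ * ρ) * (μ * uh + σ * etaK μ σ c δ uh k (-ρ))) ∧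
    -- (C)
    (∀ ρ > (0 : ℝ),
      Real.exp (μ * ρ) * (μ * uh + σ * etaK μ σ c δ uh k (-ρ)) ≤ 0 →
      0 < μ ∧ 0 < etaK μ σ c δ uh k (-ρ) ∧
        uh * Real.exp (μ * ρ) +
          σ * (∫ θ in (-ρ)..(0 : ℝ), Real.exp (-μ * θ) * etaK μ σ c δ uh k θ) < δ) := by
  have hσ : σ < 0 := by linarith
  have hη := isForcingProfile_etaK (μ := μ) (c := c) hk hσ.ne hδ0 huh.1
  have hpos : ∀ ρ > (0 : ℝ), μ ≤ 0 ∨ etaK μ σ c δ uh k (-ρ) ≤ 0 →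
      0 < Real.exp (μ * ρ) * (μ * uh + σ * etaK μ σ c δ uh k (-ρ)) := fun ρ hρ h =>
    mul_pos (Real.exp_pos _) (hη.mul_add_mul_pos hσ (by linarith) hδ0 huh (by linarith) h)
  refine ⟨fun ρ _ => hasDerivAt_forcingIntegral hη.continuous ρ,
    fun hμ ρ hρ => hpos ρ hρ (.inl hμ), fun _ ρ hρ h => hpos ρ hρ (.inr h), fun ρ hρ hle => ?_⟩
  have hμ : 0 < μ := lt_of_not_ge fun h => (hpos ρ hρ (.inl h)).not_ge hle
  have huδ : uh < δ := by
    have : -μ * δ / σ < δ := by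
      rw [div_lt_iff_of_neg hσ]
      nlinarith
    linarith [huh.2]
  refine ⟨hμ, lt_of_not_ge fun h => (hpos ρ hρ (.inr h)).not_ge hle, ?_⟩
  calc _ ≤ uh := forcingIntegral_le hη.monotone hσ.le hρ.le
        (nonpos_of_mul_nonpos_right hle (Real.exp_pos _))
    _ < δ := huδ

/-- Lemma 4.5 of Humphries–Magpantay: properties of the auxiliary
integral `I(ρ) = û e^{μρ} + σ ∫_{-ρ}^{0} e^{-μθ} η_{(k)}(θ) dθ` for `k = 2, 3`, whose
derivative is `I'(ρ) = e^{μρ}(μû + σ η_{(k)}(-ρ))`. -/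
theorem stmt_11 (k : ℕ) (hk : k = 2 ∨ k = 3)
    (μ σ c a δ uh : ℝ) (ha : 0 < a) (hc : c ≠ 0)
    (h1 : σ ≤ μ) (h2 : σ < -μ)
    (hδ0 : 0 < δ) (hδ1 : δ < |a / c|)
    (huh : uh ∈ Set.Icc (-δ) (-μ * δ / σ)) :
    -- "so that I'(ρ) = e^{μρ}[μ û + σ η_{(k)}(-ρ)]"
    (∀ ρ > (0 : ℝ),
      HasDerivAt
        (fun ρ => uh * Real.exp (μ * ρ) +
          σ * ∫ θ in (-ρ)..(0 : ℝ), Real.exp (-μ * θ) * etaK μ σ c δ uh k θ)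
        (Real.exp (μ * ρ) * (μ * uh + σ * etaK μ σ c δ uh k (-ρ))) ρ) ∧
    -- (A)
    (μ ≤ 0 → ∀ ρ > (0 : ℝ),
      0 < Real.exp (μ * ρ) * (μ * uh + σ * etaK μ σ c δ uh k (-ρ))) ∧
    -- (B)
    (0 < μ → ∀ ρ > (0 : ℝ), etaK μ σ c δ uh k (-ρ) ≤ 0 →
      0 < Real.exp (μ * ρ) * (μ * uh + σ * etaK μ σ c δ uh k (-ρ))) ∧
    -- (C)
    (∀ ρ > (0 : ℝ),
      Real.exp (μ * ρ) * (μ * uh + σ * etaK μ σ c δ uh k (-ρ)) ≤ 0 →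
      0 < μ ∧ 0 < etaK μ σ c δ uh k (-ρ) ∧
        uh * Real.exp (μ * ρ) +
          σ * (∫ θ in (-ρ)..(0 : ℝ), Real.exp (-μ * θ) * etaK μ σ c δ uh k θ) < δ) :=
  stmt_11_general k hk μ σ c δ uh h1 h2 hδ0 huh
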